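/- For every integer t ≥ 1: F_{4t+2} + 3 = F_{2t−1}·(F_{2t+2} + F_{2t+4}) and T_{4t+2} + 1 = F_{2t−1}·F_{2t+2}; consequently (T_{4t+2}+1)/(F_{4t+2}+3) = F_{2t+2}/(F_{2t+2}+F_{2t+4}) and 1 − 3·(T_{4t+2}+1)/(F_{4t+2}+3) = F_{2t+1}/(F_{2t+2}+F_{2t+4}). -/

import Mathlib

/-!
The alternating sum telescopes, `T (n + 2) = F n - T n`, which gives `T (4t + 2) = F (2t) F (2t + 1)`,
while the addition formula gives `F (4t + 2) = F (2t + 1) (F (2t) + F (2t + 2))`. Writing everything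
in `a = F (2t - 1)` and `b = F (2t)`, both identities reduce to Cassini's identity at the even index
`2t`, namely `a (a + b) = b ^ 2 + 1`. The two ratios follow after cancelling the common factor `a`.
-/

/-- `T n = Σ_{k=1}^{⌊n/2⌋} (−1)^{k+1} F_{n−2k}`. -/
def T (n : ℕ) : ℤ := ∑ k ∈ Finset.Icc 1 (n / 2), (-1 : ℤ) ^ (k + 1) * (Nat.fib (n - 2 * k) : ℤ)

open Finset in
lemma T_add_two (n : ℕ) : T (n + 2) = Nat.fib n - T n := by
  have hIcc : Icc 1 ((n + 2) / 2) = insert 1 ((Icc 1 (n / 2)).map (addRightEmbedding 1)) := by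
    rw [map_add_right_Icc, insert_Icc_add_one_left_eq_Icc (by omega)]
    congr 1
    omega
  rw [T, hIcc, sum_insert (by simp), sum_map, T, sub_eq_add_neg, ← sum_neg_distrib]
  congr 1
  · simp
  · refine sum_congr rfl fun k _ => ?_
    rw [addRightEmbedding_apply, show n + 2 - 2 * (k + 1) = n - 2 * k by omega]
    ring

lemma T_four_mul_add_two (t : ℕ) :
    T (4 * t + 2) = Nat.fib (2 * t) * Nat.fib (2 * t + 1) := by
  induction t with
  | zero => simp [T]
  | succ t ih =>
    have hsq : Nat.fib (4 * t + 3) = Nat.fib (2 * t + 1) ^ 2 + Nat.fib (2 * t + 2) ^ 2 := by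
      rw [show 4 * t + 3 = 2 * t + 1 + (2 * t + 1) + 1 by ring, Nat.fib_add]
      ring
    rw [show 4 * (t + 1) + 2 = 4 * t + 2 + 2 + 2 by ring, T_add_two, T_add_two, ih,
      Nat.fib_add_two, hsq, show 2 * (t + 1) = 2 * t + 2 by ring,
      Nat.fib_add_two (n := 2 * t + 1), Nat.fib_add_two (n := 2 * t)]
    push_cast
    ring

lemma fib_four_mul_add_two (t : ℕ) :
    Nat.fib (4 * t + 2) = Nat.fib (2 * t + 1) * (Nat.fib (2 * t) + Nat.fib (2 * t + 2)) := by
  rw [show 4 * t + 2 = 2 * t + (2 * t + 1) + 1 by ring, Nat.fib_add]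
  ring

lemma fib_two_mul_sub_one_mul_fib_two_mul_add_one {n : ℕ} (hn : n ≠ 0) :
    (Nat.fib (2 * n - 1) : ℤ) * Nat.fib (2 * n + 1) = Nat.fib (2 * n) ^ 2 + 1 := by
  have h := Int.fib_succ_mul_fib_pred_sub_fib_sq ((2 * n : ℕ) : ℤ)
  rw [← Nat.cast_succ, ← Nat.cast_pred (by omega), Int.fib_natCast, Int.fib_natCast,
    Int.fib_natCast, Int.natAbs_natCast, Even.neg_one_pow (even_two_mul n)] at h
  linear_combination h

lemma fib_add_two_add_fib_add_four (n : ℕ) :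
    Nat.fib (n + 2) + Nat.fib (n + 4) = 3 * Nat.fib (n + 2) + Nat.fib (n + 1) := by
  rw [Nat.fib_add_two (n := n + 2), Nat.fib_add_two (n := n + 1)]
  ring

lemma fib_four_mul_add_two_add_three {t : ℕ} (ht : t ≠ 0) :
    (Nat.fib (4 * t + 2) : ℤ) + 3
      = Nat.fib (2 * t - 1) * (Nat.fib (2 * t + 2) + Nat.fib (2 * t + 4)) := by
  have hcassini := fib_two_mul_sub_one_mul_fib_two_mul_add_one ht
  have hodd : (Nat.fib (2 * t + 1) : ℤ) = Nat.fib (2 * t - 1) + Nat.fib (2 * t) := by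
    exact_mod_cast Nat.fib_add_one (by omega)
  have hsum : (Nat.fib (2 * t + 2) + Nat.fib (2 * t + 4) : ℤ)
      = 3 * Nat.fib (2 * t + 2) + Nat.fib (2 * t + 1) := by
    exact_mod_cast fib_add_two_add_fib_add_four (2 * t)
  rw [hsum, fib_four_mul_add_two, Nat.fib_add_two (n := 2 * t)]
  push_cast
  rw [hodd] at hcassini ⊢
  linear_combination (-3) * hcassini

lemma T_four_mul_add_two_add_one {t : ℕ} (ht : t ≠ 0) :
    T (4 * t + 2) + 1 = Nat.fib (2 * t - 1) * Nat.fib (2 * t + 2) := by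
  have hcassini := fib_two_mul_sub_one_mul_fib_two_mul_add_one ht
  have hodd : (Nat.fib (2 * t + 1) : ℤ) = Nat.fib (2 * t - 1) + Nat.fib (2 * t) := by
    exact_mod_cast Nat.fib_add_one (by omega)
  rw [T_four_mul_add_two, Nat.fib_add_two (n := 2 * t)]
  push_cast
  rw [hodd] at hcassini ⊢
  linear_combination -hcassini

theorem max_point_identities (t : ℕ) (ht : 1 ≤ t) :
    (Nat.fib (4 * t + 2) : ℤ) + 3
      = (Nat.fib (2 * t - 1) : ℤ) * ((Nat.fib (2 * t + 2) : ℤ) + (Nat.fib (2 * t + 4) : ℤ)) ∧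
    T (4 * t + 2) + 1 = (Nat.fib (2 * t - 1) : ℤ) * (Nat.fib (2 * t + 2) : ℤ) ∧
    ((T (4 * t + 2) : ℝ) + 1) / ((Nat.fib (4 * t + 2) : ℝ) + 3)
      = (Nat.fib (2 * t + 2) : ℝ) / ((Nat.fib (2 * t + 2) : ℝ) + (Nat.fib (2 * t + 4) : ℝ)) ∧
    1 - 3 * ((T (4 * t + 2) : ℝ) + 1) / ((Nat.fib (4 * t + 2) : ℝ) + 3)
      = (Nat.fib (2 * t + 1) : ℝ) / ((Nat.fib (2 * t + 2) : ℝ) + (Nat.fib (2 * t + 4) : ℝ)) := by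
  have ht0 : t ≠ 0 := Nat.one_le_iff_ne_zero.mp ht
  have hF := fib_four_mul_add_two_add_three ht0
  have hT := T_four_mul_add_two_add_one ht0
  have ha : (Nat.fib (2 * t - 1) : ℝ) ≠ 0 := by
    exact_mod_cast (Nat.fib_pos.mpr (by omega)).ne'
  have hS : (Nat.fib (2 * t + 2) + Nat.fib (2 * t + 4) : ℝ) ≠ 0 := by
    exact_mod_cast (Nat.add_pos_left (Nat.fib_pos.mpr (by omega)) _).ne'
  have hratio : ((T (4 * t + 2) : ℝ) + 1) / ((Nat.fib (4 * t + 2) : ℝ) + 3)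
      = (Nat.fib (2 * t + 2) : ℝ) / ((Nat.fib (2 * t + 2) : ℝ) + (Nat.fib (2 * t + 4) : ℝ)) := by
    have hT' : (T (4 * t + 2) : ℝ) + 1 = Nat.fib (2 * t - 1) * Nat.fib (2 * t + 2) := by
      exact_mod_cast hT
    have hF' : (Nat.fib (4 * t + 2) : ℝ) + 3
        = Nat.fib (2 * t - 1) * (Nat.fib (2 * t + 2) + Nat.fib (2 * t + 4)) := by
      exact_mod_cast hF
    rw [hT', hF', mul_div_mul_left _ _ ha]
  have hsum : (Nat.fib (2 * t + 2) + Nat.fib (2 * t + 4) : ℝ)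
      = 3 * Nat.fib (2 * t + 2) + Nat.fib (2 * t + 1) := by
    exact_mod_cast fib_add_two_add_fib_add_four (2 * t)
  refine ⟨hF, hT, hratio, ?_⟩
  rw [mul_div_assoc, hratio, eq_div_iff hS, sub_mul, mul_assoc, div_mul_cancel₀ _ hS, hsum]
  ring
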